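/- Let n ≥ 1, κ ∈ ℂ∖{0}, and let F, G: ℂ → ℂ be holomorphic. Consider the Zakrzewski-type bracket on ℂ^{2n} defined below. Then the involution ι: ℂ^{2n} → ℂ^{2n}, ι(a,b) := (b,a), is an anti-Poisson automorphism: for all differentiable functions F₁, F₂ on ℂ^{2n}, {F₁∘ι, F₂∘ι} = −{F₁, F₂}∘ι. -/
import Mathlib


open Matrix BigOperators

noncomputable section

attribute [local instance] Matrix.normedAddCommGroup Matrix.normedSpace

/-- complex-valued sign of an integer, with `csgn 0 = 0`. -/
def csgn (m : ℤ) : ℂ := (m.sign : ℂ)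

/-- Kronecker delta with values in `ℂ`. -/
def cdelta {K : Type*} [DecidableEq K] (i j : K) : ℂ := if i = j then 1 else 0

/-- `ℂ^{2n} = ℂⁿ × ℂⁿ` with coordinates `(a,b)`. -/
abbrev ZSp (n : ℕ) : Type := (Fin n → ℂ) × (Fin n → ℂ)

/-- coordinate direction for `a_i`. -/
def za (n : ℕ) (i : Fin n) : ZSp n := (Pi.single i 1, 0)

/-- coordinate direction for `b_i`. -/
def zb (n : ℕ) (i : Fin n) : ZSp n := (0, Pi.single i 1)

/-- `{a_i, a_j}` for the Zakrzewski-type bracket. -/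
def zaa (n : ℕ) (κ : ℂ) (y : ZSp n) (i j : Fin n) : ℂ :=
  κ / 2 * csgn (((i : ℕ) : ℤ) - ((j : ℕ) : ℤ)) * y.1 i * y.1 j

/-- `{b_i, b_j}` for the Zakrzewski-type bracket. -/
def zbb (n : ℕ) (κ : ℂ) (y : ZSp n) (i j : Fin n) : ℂ :=
  -(κ / 2) * csgn (((i : ℕ) : ℤ) - ((j : ℕ) : ℤ)) * y.2 i * y.2 j

/-- `{a_i, b_l}` for the Zakrzewski-type bracket with functions `F`, `G` of `t = Σ_r a_r b_r`. -/
def zab (n : ℕ) (κ : ℂ) (F G : ℂ → ℂ) (y : ZSp n) (i l : Fin n) : ℂ :=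
  κ / 2 * cdelta i l * F (∑ r : Fin n, y.1 r * y.2 r)
    - κ / 2 * G (∑ r : Fin n, y.1 r * y.2 r) * y.1 i * y.2 l
    + κ / 2 * cdelta i l *
        ∑ r : Fin n, csgn (((r : ℕ) : ℤ) - ((i : ℕ) : ℤ)) * y.1 r * y.2 r

/-- The Zakrzewski-type bivector bracket on `ℂ^{2n}`. -/
def brZ (n : ℕ) (κ : ℂ) (F G : ℂ → ℂ) (F₁ F₂ : ZSp n → ℂ) (y : ZSp n) : ℂ :=
  ∑ i : Fin n, ∑ j : Fin n,
    (zaa n κ y i j * fderiv ℂ F₁ y (za n i) * fderiv ℂ F₂ y (za n j)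
      + zab n κ F G y i j *
          (fderiv ℂ F₁ y (za n i) * fderiv ℂ F₂ y (zb n j)
            - fderiv ℂ F₂ y (za n i) * fderiv ℂ F₁ y (zb n j))
      + zbb n κ y i j * fderiv ℂ F₁ y (zb n i) * fderiv ℂ F₂ y (zb n j))

lemma csgn_antisymm (m : ℤ) : csgn (-m) = -csgn m := by
  simp [csgn]

lemma zaa_swap (n : ℕ) (κ : ℂ) (y : ZSp n) (i j : Fin n) :
    zaa n κ y i j = -zbb n κ (y.2, y.1) i j := by
  simp [zaa, zbb]

lemma zbb_swap (n : ℕ) (κ : ℂ) (y : ZSp n) (i j : Fin n) :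
    zbb n κ y i j = -zaa n κ (y.2, y.1) i j := by
  simp [zaa, zbb]

lemma zab_swap (n : ℕ) (κ : ℂ) (F G : ℂ → ℂ) (y : ZSp n) (i j : Fin n) :
    zab n κ F G y j i = zab n κ F G (y.2, y.1) i j := by
  have ht : (∑ r : Fin n, y.1 r * y.2 r) = ∑ r : Fin n, y.2 r * y.1 r :=
    Finset.sum_congr rfl fun r _ => mul_comm _ _
  rcases eq_or_ne i j with h | h
  · subst h
    simp only [zab, cdelta, if_pos rfl, ht]
    have hs : (∑ r : Fin n, csgn (((r : ℕ) : ℤ) - ((i : ℕ) : ℤ)) * y.2 r * y.1 r)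
        = ∑ r : Fin n, csgn (((r : ℕ) : ℤ) - ((i : ℕ) : ℤ)) * y.1 r * y.2 r :=
      Finset.sum_congr rfl fun r _ => by ring
    rw [hs]; ring
  · have h' : j ≠ i := fun hh => h hh.symm
    simp [zab, cdelta, h, h', ht]
    ring

/-- the involution `ι(a,b) = (b,a)` is an anti-Poisson automorphism for the
Zakrzewski-type bracket on `ℂ^{2n}`. -/
theorem statement16 (n : ℕ) (hn : 1 ≤ n) (κ : ℂ) (hκ : κ ≠ 0)
    (F G : ℂ → ℂ) (hF : Differentiable ℂ F) (hG : Differentiable ℂ G) :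
    ∀ F₁ F₂ : ZSp n → ℂ, Differentiable ℂ F₁ → Differentiable ℂ F₂ →
      ∀ y : ZSp n,
        brZ n κ F G (fun z => F₁ (z.2, z.1)) (fun z => F₂ (z.2, z.1)) y
          = -brZ n κ F G F₁ F₂ (y.2, y.1) := by
  intro F₁ F₂ hF₁ hF₂ y
  set σ : ZSp n →L[ℂ] ZSp n :=
    (ContinuousLinearMap.snd ℂ (Fin n → ℂ) (Fin n → ℂ)).prod
      (ContinuousLinearMap.fst ℂ (Fin n → ℂ) (Fin n → ℂ)) with hσdef
  have hσ : ∀ z : ZSp n, σ z = (z.2, z.1) := fun z => rfl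
  have hder : ∀ (H : ZSp n → ℂ), Differentiable ℂ H →
      fderiv ℂ (fun z : ZSp n => H (z.2, z.1)) y
        = (fderiv ℂ H (y.2, y.1)).comp σ := by
    intro H hH
    have h1 : (fun z : ZSp n => H (z.2, z.1)) = H ∘ σ := rfl
    rw [h1, fderiv_comp y (hH (σ y)) σ.differentiableAt, σ.fderiv]
    rfl
  have hza : ∀ i : Fin n, σ (za n i) = zb n i := fun i => rfl
  have hzb : ∀ i : Fin n, σ (zb n i) = za n i := fun i => rfl
  set D₁ := fderiv ℂ F₁ (y.2, y.1) with hD₁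
  set D₂ := fderiv ℂ F₂ (y.2, y.1) with hD₂
  have hcomp₁ : ∀ v : ZSp n,
      fderiv ℂ (fun z : ZSp n => F₁ (z.2, z.1)) y v = D₁ (σ v) := by
    intro v; rw [hder F₁ hF₁]; rfl
  have hcomp₂ : ∀ v : ZSp n,
      fderiv ℂ (fun z : ZSp n => F₂ (z.2, z.1)) y v = D₂ (σ v) := by
    intro v; rw [hder F₂ hF₂]; rfl
  unfold brZ
  simp only [hcomp₁, hcomp₂, hza, hzb, ← hD₁, ← hD₂]
  simp only [Finset.sum_add_distrib, neg_add]
  have e1 : (∑ i : Fin n, ∑ j : Fin n,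
        zaa n κ y i j * D₁ (zb n i) * D₂ (zb n j))
      = -(∑ i : Fin n, ∑ j : Fin n,
        zbb n κ (y.2, y.1) i j * D₁ (zb n i) * D₂ (zb n j)) := by
    rw [← Finset.sum_neg_distrib]
    refine Finset.sum_congr rfl fun i _ => ?_
    rw [← Finset.sum_neg_distrib]
    refine Finset.sum_congr rfl fun j _ => ?_
    rw [zaa_swap]; ring
  have e3 : (∑ i : Fin n, ∑ j : Fin n,
        zbb n κ y i j * D₁ (za n i) * D₂ (za n j))
      = -(∑ i : Fin n, ∑ j : Fin n,
        zaa n κ (y.2, y.1) i j * D₁ (za n i) * D₂ (za n j)) := by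
    rw [← Finset.sum_neg_distrib]
    refine Finset.sum_congr rfl fun i _ => ?_
    rw [← Finset.sum_neg_distrib]
    refine Finset.sum_congr rfl fun j _ => ?_
    rw [zbb_swap]; ring
  have e2 : (∑ i : Fin n, ∑ j : Fin n,
        zab n κ F G y i j * (D₁ (zb n i) * D₂ (za n j) - D₂ (zb n i) * D₁ (za n j)))
      = -(∑ i : Fin n, ∑ j : Fin n,
        zab n κ F G (y.2, y.1) i j *
          (D₁ (za n i) * D₂ (zb n j) - D₂ (za n i) * D₁ (zb n j))) := by
    rw [Finset.sum_comm, ← Finset.sum_neg_distrib]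
    refine Finset.sum_congr rfl fun i _ => ?_
    rw [← Finset.sum_neg_distrib]
    refine Finset.sum_congr rfl fun j _ => ?_
    rw [zab_swap]; ring
  rw [e1, e2, e3]; ring
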